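/- Let d, n be positive integers such that φ(m) > d for all m > n. A d×d matrix M over ℚ is torsion (M^p = M^q for some distinct naturals p, q) if and only if M annihilates the polynomial z^d · ∏_{j=1}^n γ_j(z). -/

import Mathlib

/-!
If `M ^ p = M ^ (p + k)` with `k > 0`, the minimal polynomial of `M` divides
`X ^ p * (X ^ k - 1) = X ^ p * ∏_{j ∣ k} Φ_j` and has degree at most `d`. Its power-of-`X` part then
divides `X ^ d`, and it is coprime to every `Φ_j` with `j > n`, which is irreducible of degree
`φ j > d`. Conversely `∏_{j ≤ n} Φ_j` divides `X ^ n! - 1`, so a matrix annihilated by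
`X ^ d * ∏_{j ≤ n} Φ_j` satisfies `M ^ (d + n!) = M ^ d`.
-/

open Polynomial

namespace Polynomial

variable {K : Type*} [Field K]

theorem dvd_X_pow_natDegree_of_dvd_X_pow {a : K[X]} {p : ℕ} (h : a ∣ X ^ p) :
    a ∣ X ^ a.natDegree := by
  obtain ⟨i, -, hi⟩ := (dvd_prime_pow prime_X p).mp h
  rw [natDegree_eq_of_degree_eq (degree_eq_degree_of_associated hi), natDegree_X_pow]
  exact hi.dvd

theorem isCoprime_of_irreducible_of_natDegree_lt {a f : K[X]} (ha : a ≠ 0)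
    (hf : Irreducible f) (hlt : a.natDegree < f.natDegree) : IsCoprime a f := by
  rw [isCoprime_comm, hf.coprime_iff_not_dvd]
  exact fun hdvd => (natDegree_le_of_dvd hdvd ha).not_gt hlt

theorem prod_cyclotomic_Icc_dvd_X_pow_factorial_sub_one (n : ℕ) (R : Type*) [CommRing R] :
    ∏ j ∈ Finset.Icc 1 n, cyclotomic j R ∣ X ^ n.factorial - 1 := by
  rw [← prod_cyclotomic_eq_X_pow_sub_one n.factorial_pos]
  refine Finset.prod_dvd_prod_of_subset _ _ _ fun j hj => ?_
  rw [Finset.mem_Icc] at hj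
  exact Nat.mem_divisors.mpr ⟨Nat.dvd_factorial hj.1 hj.2, n.factorial_ne_zero⟩

theorem dvd_prod_cyclotomic_Icc_of_dvd_X_pow_sub_one {b : ℚ[X]} {k n : ℕ} (hk : 0 < k)
    (hb0 : b ≠ 0) (hphi : ∀ m, n < m → b.natDegree < m.totient) (hb : b ∣ X ^ k - 1) :
    b ∣ ∏ j ∈ Finset.Icc 1 n, cyclotomic j ℚ := by
  rw [← prod_cyclotomic_eq_X_pow_sub_one hk,
    ← Finset.prod_filter_mul_prod_filter_not k.divisors (· ≤ n)] at hb
  have hcop : IsCoprime b (∏ j ∈ k.divisors.filter (¬ · ≤ n), cyclotomic j ℚ) := by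
    refine IsCoprime.prod_right fun j hj => ?_
    have hjn : n < j := not_le.mp (Finset.mem_filter.mp hj).2
    refine isCoprime_of_irreducible_of_natDegree_lt hb0
      (cyclotomic.irreducible_rat (by omega)) ?_
    rw [natDegree_cyclotomic]
    exact hphi j hjn
  refine (hcop.dvd_of_dvd_mul_right hb).trans (Finset.prod_dvd_prod_of_subset _ _ _ fun j hj => ?_)
  simp only [Finset.mem_filter, Nat.mem_divisors] at hj
  exact Finset.mem_Icc.mpr ⟨Nat.pos_of_dvd_of_pos hj.1.1 hk, hj.2⟩

theorem dvd_X_pow_mul_prod_cyclotomic_Icc {f : ℚ[X]} {d n p k : ℕ} (hk : 0 < k)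
    (hf0 : f ≠ 0) (hfd : f.natDegree ≤ d) (hphi : ∀ m, n < m → d < m.totient)
    (hf : f ∣ X ^ p * (X ^ k - 1)) :
    f ∣ X ^ d * ∏ j ∈ Finset.Icc 1 n, cyclotomic j ℚ := by
  obtain ⟨a, b, ha, hb, rfl⟩ := exists_dvd_and_dvd_of_dvd_mul hf
  have had : a.natDegree ≤ d := (natDegree_le_of_dvd (dvd_mul_right a b) hf0).trans hfd
  have hbd : b.natDegree ≤ d := (natDegree_le_of_dvd (dvd_mul_left b a) hf0).trans hfd
  exact mul_dvd_mul ((dvd_X_pow_natDegree_of_dvd_X_pow ha).trans (pow_dvd_pow X had))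
    (dvd_prod_cyclotomic_Icc_of_dvd_X_pow_sub_one hk (right_ne_zero_of_mul hf0)
      (fun m hm => hbd.trans_lt (hphi m hm)) hb)

end Polynomial

theorem minpoly_dvd_X_pow_mul_X_pow_sub_one {K A : Type*} [Field K] [Ring A] [Algebra K A]
    {x : A} {p k : ℕ} (h : x ^ (p + k) = x ^ p) : minpoly K x ∣ X ^ p * (X ^ k - 1) := by
  apply minpoly.dvd
  simp [mul_sub, ← pow_add, h]

theorem pow_add_eq_of_aeval_X_pow_mul_eq_zero {R A : Type*} [CommRing R] [Ring A] [Algebra R A]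
    {x : A} {f : R[X]} {d k : ℕ} (hf : f ∣ X ^ k - 1) (hx : aeval x (X ^ d * f) = 0) :
    x ^ (d + k) = x ^ d := by
  obtain ⟨c, hc⟩ := mul_dvd_mul_left (X ^ d) hf
  have : aeval x (X ^ (d + k) - X ^ d : R[X]) = 0 := by
    rw [show (X ^ (d + k) - X ^ d : R[X]) = X ^ d * (X ^ k - 1) by ring, hc, map_mul, hx,
      zero_mul]
  simpa [sub_eq_zero] using this

theorem Matrix.natDegree_minpoly_le {ι K : Type*} [Fintype ι] [DecidableEq ι] [Field K]
    (M : Matrix ι ι K) : (minpoly K M).natDegree ≤ Fintype.card ι :=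
  (natDegree_le_of_dvd M.minpoly_dvd_charpoly M.charpoly_monic.ne_zero).trans
    M.charpoly_natDegree_eq_dim.le

theorem torsion_iff_annihilates_general (d n : ℕ)
    (hphi : ∀ m : ℕ, n < m → d < Nat.totient m)
    (M : Matrix (Fin d) (Fin d) ℚ) :
    (∃ p q : ℕ, p ≠ q ∧ M ^ p = M ^ q) ↔
      Polynomial.aeval M
        (Polynomial.X ^ d * ∏ j ∈ Finset.Icc 1 n, Polynomial.cyclotomic j ℚ) = 0 := by
  constructor
  · rintro ⟨p, q, hpq, hM⟩
    wlog hlt : p < q generalizing p q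
    · exact this q p hpq.symm hM.symm (by omega)
    obtain ⟨k, rfl⟩ := Nat.exists_eq_add_of_le hlt.le
    obtain ⟨c, hc⟩ := dvd_X_pow_mul_prod_cyclotomic_Icc (by omega)
      (minpoly.ne_zero M.isIntegral) (by simpa using M.natDegree_minpoly_le) hphi
      (minpoly_dvd_X_pow_mul_X_pow_sub_one hM.symm)
    rw [hc, map_mul, minpoly.aeval, zero_mul]
  · intro h
    exact ⟨d + n.factorial, d, by have := n.factorial_pos; omega,
      pow_add_eq_of_aeval_X_pow_mul_eq_zero (prod_cyclotomic_Icc_dvd_X_pow_factorial_sub_one n ℚ) h⟩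

theorem torsion_iff_annihilates (d n : ℕ) (hd : 0 < d) (hn : 0 < n)
    (hphi : ∀ m : ℕ, n < m → d < Nat.totient m)
    (M : Matrix (Fin d) (Fin d) ℚ) :
    (∃ p q : ℕ, p ≠ q ∧ M ^ p = M ^ q) ↔
      Polynomial.aeval M
        (Polynomial.X ^ d * ∏ j ∈ Finset.Icc 1 n, Polynomial.cyclotomic j ℚ) = 0 :=
  torsion_iff_annihilates_general d n hphi M
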